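/- In the Gaudin realization, the generating function of integrals of motion admits the pole expansion t(λ) = Σ_{a=1}^{N} ( c₂(a)/(λ − z_a)² + 2 H^{(a)}/(λ − z_a) ) for every λ ∈ ℂ ∖ {z₁,…,z_N}, where c₂(a) = h_a² − h_a + 4X⁺_a X⁻_a + 2v⁺_a v⁻_a is the local Casimir operator at site a and H^{(a)} are the Gaudin Hamiltonians. -/

import Mathlib

/-!
Expanding the products in `t(λ)` gives a double sum `Σ_{a,b} T_{ab}/((λ - z_a)(λ - z_b))` with
`T_{ab} = h_a h_b + 4 X⁺_a X⁻_b + 2 v⁺_a v⁻_b`. The diagonal terms together with `h′(λ)` produce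
the double poles with the local Casimirs. Off the diagonal, partial fractions
`1/((λ - z_a)(λ - z_b)) = (1/(z_a - z_b)) (1/(λ - z_a) - 1/(λ - z_b))` and the exchange `a ↔ b`
turn the sum into `Σ_a (1/(λ - z_a)) Σ_{b ≠ a} (T_{ab} + T_{ba})/(z_a - z_b)`, and the
(super)commutation across sites gives `T_{ab} + T_{ba} = 2 Ω_{ab}`, twice the summand of `H^{(a)}`.
-/

/-- osp(1|2) Gaudin model data: sites, inhomogeneity parameters, and local
osp(1|2) operators with super-commutation relations across sites. -/
structure OspGaudinData (N : ℕ) (H : Type*) [AddCommGroup H] [Module ℂ H] where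
  z : Fin N → ℂ
  z_inj : Function.Injective z
  h : Fin N → Module.End ℂ H
  Xp : Fin N → Module.End ℂ H
  Xm : Fin N → Module.End ℂ H
  vp : Fin N → Module.End ℂ H
  vm : Fin N → Module.End ℂ H
  rel_hXp : ∀ a, h a * Xp a - Xp a * h a = (2:ℂ) • Xp a
  rel_hXm : ∀ a, h a * Xm a - Xm a * h a = (-2:ℂ) • Xm a
  rel_XpXm : ∀ a, Xp a * Xm a - Xm a * Xp a = h a
  rel_hvp : ∀ a, h a * vp a - vp a * h a = vp a
  rel_hvm : ∀ a, h a * vm a - vm a * h a = -vm a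
  rel_vpvm : ∀ a, vp a * vm a + vm a * vp a = -h a
  rel_Xmvp : ∀ a, Xm a * vp a - vp a * Xm a = vm a
  rel_Xpvm : ∀ a, Xp a * vm a - vm a * Xp a = vp a
  rel_vpvp : ∀ a, vp a * vp a = Xp a
  rel_vmvm : ∀ a, vm a * vm a = -Xm a
  rel_Xpvp : ∀ a, Xp a * vp a = vp a * Xp a
  rel_Xmvm : ∀ a, Xm a * vm a = vm a * Xm a
  even_comm : ∀ a b, a ≠ b → ∀ Y ∈ ({h a, Xp a, Xm a} : Set (Module.End ℂ H)),
      ∀ Z ∈ ({h b, Xp b, Xm b, vp b, vm b} : Set (Module.End ℂ H)), Y * Z = Z * Y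
  odd_anticomm : ∀ a b, a ≠ b → ∀ Y ∈ ({vp a, vm a} : Set (Module.End ℂ H)),
      ∀ Z ∈ ({vp b, vm b} : Set (Module.End ℂ H)), Y * Z + Z * Y = 0

namespace OspGaudinData

variable {N : ℕ} {H : Type*} [AddCommGroup H] [Module ℂ H]

/-- The Gaudin realization h(λ). -/
noncomputable def hl (G : OspGaudinData N H) (lam : ℂ) : Module.End ℂ H :=
  ∑ a, ((lam - G.z a)⁻¹) • G.h a

noncomputable def Xpl (G : OspGaudinData N H) (lam : ℂ) : Module.End ℂ H :=
  ∑ a, ((lam - G.z a)⁻¹) • G.Xp a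

noncomputable def Xml (G : OspGaudinData N H) (lam : ℂ) : Module.End ℂ H :=
  ∑ a, ((lam - G.z a)⁻¹) • G.Xm a

noncomputable def vpl (G : OspGaudinData N H) (lam : ℂ) : Module.End ℂ H :=
  ∑ a, ((lam - G.z a)⁻¹) • G.vp a

noncomputable def vml (G : OspGaudinData N H) (lam : ℂ) : Module.End ℂ H :=
  ∑ a, ((lam - G.z a)⁻¹) • G.vm a

/-- h′(λ) = −Σ_a h_a/(λ − z_a)². -/
noncomputable def hl' (G : OspGaudinData N H) (lam : ℂ) : Module.End ℂ H :=
  -∑ a, (((lam - G.z a)^2)⁻¹) • G.h a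

/-- The generating function t(λ) of the integrals of motion. -/
noncomputable def tOp (G : OspGaudinData N H) (lam : ℂ) : Module.End ℂ H :=
  G.hl lam * G.hl lam + G.hl' lam + (4:ℂ) • (G.Xpl lam * G.Xml lam)
    + (2:ℂ) • (G.vpl lam * G.vml lam)

/-- The Gaudin Hamiltonian at site `a`. -/
noncomputable def Gham (G : OspGaudinData N H) (a : Fin N) : Module.End ℂ H :=
  ∑ b ∈ Finset.univ.erase a, ((G.z a - G.z b)⁻¹) •
    (G.h a * G.h b + (2:ℂ) • (G.Xp a * G.Xm b + G.Xm a * G.Xp b)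
      + (G.vp a * G.vm b - G.vm a * G.vp b))

end OspGaudinData

open Finset

theorem Finset.sum_smul_mul_sum_smul {ι R A : Type*} [Fintype ι] [CommSemiring R] [Semiring A]
    [Algebra R A] (f g : ι → R) (x y : ι → A) :
    (∑ a, f a • x a) * (∑ b, g b • y b) = ∑ a, ∑ b, (f a * g b) • (x a * y b) := by
  rw [sum_mul_sum]
  exact sum_congr rfl fun a _ => sum_congr rfl fun b _ => smul_mul_smul_comm _ _ _ _

section OffDiagonal

variable {ι : Type*} [Fintype ι] [DecidableEq ι]

theorem Finset.sum_sum_eq_sum_diag_add_sum_sum_erase {M : Type*} [AddCommMonoid M]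
    (F : ι → ι → M) :
    ∑ a, ∑ b, F a b = ∑ a, F a a + ∑ a, ∑ b ∈ univ.erase a, F a b := by
  rw [← sum_add_distrib]
  exact sum_congr rfl fun a _ => (add_sum_erase _ (F a) (mem_univ a)).symm

theorem Finset.sum_sum_erase_comm {M : Type*} [AddCommMonoid M] (F : ι → ι → M) :
    ∑ a, ∑ b ∈ univ.erase a, F a b = ∑ a, ∑ b ∈ univ.erase a, F b a :=
  sum_comm' fun a b => by simp [ne_comm, and_comm]

theorem Finset.sum_sum_erase_smul_eq_of_partial_fractions {R M : Type*} [CommRing R]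
    [AddCommGroup M] [Module R M] (f : ι → R) (w : ι → ι → R) (T : ι → ι → M)
    (hw : ∀ a b, a ≠ b → w b a = -w a b) (hf : ∀ a b, a ≠ b → f a * f b = w a b * (f a - f b)) :
    ∑ a, ∑ b ∈ univ.erase a, (f a * f b) • T a b
      = ∑ a, ∑ b ∈ univ.erase a, (w a b * f a) • (T a b + T b a) := by
  have hsplit : ∑ a, ∑ b ∈ univ.erase a, (f a * f b) • T a b
      = ∑ a, ∑ b ∈ univ.erase a, (w a b * f a) • T a b
        - ∑ a, ∑ b ∈ univ.erase a, (w a b * f b) • T a b := by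
    simp only [← sum_sub_distrib]
    refine sum_congr rfl fun a _ => sum_congr rfl fun b hb => ?_
    rw [hf a b (ne_of_mem_erase hb).symm, mul_sub, sub_smul]
  have hswap : ∑ a, ∑ b ∈ univ.erase a, (w a b * f b) • T a b
      = -∑ a, ∑ b ∈ univ.erase a, (w a b * f a) • T b a := by
    rw [sum_sum_erase_comm, ← sum_neg_distrib]
    refine sum_congr rfl fun a _ => ?_
    rw [← sum_neg_distrib]
    exact sum_congr rfl fun b hb => by rw [hw a b (ne_of_mem_erase hb).symm, neg_mul, neg_smul]
  rw [hsplit, hswap, sub_neg_eq_add, ← sum_add_distrib]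
  exact sum_congr rfl fun a _ => by simp only [← sum_add_distrib, smul_add]

end OffDiagonal

theorem inv_sub_mul_inv_sub_eq {K : Type*} [Field K] {lam x y : K} (hx : lam ≠ x) (hy : lam ≠ y)
    (hxy : x ≠ y) :
    (lam - x)⁻¹ * (lam - y)⁻¹ = (x - y)⁻¹ * ((lam - x)⁻¹ - (lam - y)⁻¹) := by
  field_simp [sub_ne_zero.mpr hx, sub_ne_zero.mpr hy, sub_ne_zero.mpr hxy]
  ring

namespace OspGaudinData

variable {N : ℕ} {H : Type*} [AddCommGroup H] [Module ℂ H] (G : OspGaudinData N H)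

def casimir (a : Fin N) : Module.End ℂ H :=
  G.h a * G.h a - G.h a + (4:ℂ) • (G.Xp a * G.Xm a) + (2:ℂ) • (G.vp a * G.vm a)

/-- The coefficient of `1/((λ - z_a)(λ - z_b))` in `t(λ) - h′(λ)`. -/
def quad (a b : Fin N) : Module.End ℂ H :=
  G.h a * G.h b + (4:ℂ) • (G.Xp a * G.Xm b) + (2:ℂ) • (G.vp a * G.vm b)

/-- The summand of the Gaudin Hamiltonian, the osp(1|2) split Casimir `Ω_{ab}`. -/
def splitCasimir (a b : Fin N) : Module.End ℂ H :=
  G.h a * G.h b + (2:ℂ) • (G.Xp a * G.Xm b + G.Xm a * G.Xp b)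
    + (G.vp a * G.vm b - G.vm a * G.vp b)

theorem tOp_eq_sum_sum_quad_add_hl' (lam : ℂ) :
    G.tOp lam = ∑ a, ∑ b, ((lam - G.z a)⁻¹ * (lam - G.z b)⁻¹) • G.quad a b + G.hl' lam := by
  simp only [tOp, hl, Xpl, Xml, vpl, vml, sum_smul_mul_sum_smul, quad, smul_add, smul_sum,
    sum_add_distrib, smul_comm (4:ℂ), smul_comm (2:ℂ)]
  abel

theorem sum_diag_quad_add_hl' (lam : ℂ) :
    ∑ a, ((lam - G.z a)⁻¹ * (lam - G.z a)⁻¹) • G.quad a a + G.hl' lam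
      = ∑ a, ((lam - G.z a)^2)⁻¹ • G.casimir a := by
  rw [hl', ← sum_neg_distrib, ← sum_add_distrib]
  refine sum_congr rfl fun a _ => ?_
  rw [← mul_inv, ← sq, quad, casimir]
  module

theorem quad_add_quad_swap {a b : Fin N} (hab : a ≠ b) :
    G.quad a b + G.quad b a = (2:ℂ) • G.splitCasimir a b := by
  have hh : G.h b * G.h a = G.h a * G.h b := G.even_comm b a hab.symm _ (by simp) _ (by simp)
  have hX : G.Xp b * G.Xm a = G.Xm a * G.Xp b := G.even_comm b a hab.symm _ (by simp) _ (by simp)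
  have hv : G.vp b * G.vm a = -(G.vm a * G.vp b) :=
    eq_neg_of_add_eq_zero_left (G.odd_anticomm b a hab.symm _ (by simp) _ (by simp))
  rw [quad, quad, splitCasimir, hh, hX, hv]
  module

theorem sum_offDiag_quad {lam : ℂ} (hlam : ∀ a, lam ≠ G.z a) :
    ∑ a, ∑ b ∈ univ.erase a, ((lam - G.z a)⁻¹ * (lam - G.z b)⁻¹) • G.quad a b
      = ∑ a, (2 * (lam - G.z a)⁻¹) • G.Gham a := by
  rw [sum_sum_erase_smul_eq_of_partial_fractions _ (fun a b => (G.z a - G.z b)⁻¹) _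
    (fun a b _ => by rw [← inv_neg, neg_sub])
    (fun a b hab => inv_sub_mul_inv_sub_eq (hlam a) (hlam b) (G.z_inj.ne hab))]
  refine sum_congr rfl fun a _ => ?_
  rw [Gham, smul_sum]
  refine sum_congr rfl fun b hb => ?_
  rw [G.quad_add_quad_swap (ne_of_mem_erase hb).symm, ← splitCasimir, smul_smul, smul_smul]
  ring_nf

end OspGaudinData

theorem tOp_pole_expansion_general {N : ℕ} {H : Type*} [AddCommGroup H] [Module ℂ H]
    (G : OspGaudinData N H) (lam : ℂ) (hlam : ∀ a, lam ≠ G.z a) :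
    G.tOp lam = ∑ a,
      ((((lam - G.z a)^2)⁻¹) •
          (G.h a * G.h a - G.h a + (4:ℂ) • (G.Xp a * G.Xm a)
            + (2:ℂ) • (G.vp a * G.vm a))
        + (2 * (lam - G.z a)⁻¹) • G.Gham a) := by
  rw [G.tOp_eq_sum_sum_quad_add_hl', sum_sum_eq_sum_diag_add_sum_sum_erase, add_right_comm,
    G.sum_diag_quad_add_hl', G.sum_offDiag_quad hlam, ← sum_add_distrib]
  rfl

/-- pole expansion of t(λ), with the local Casimir operators as
coefficients of the second-order poles and the Gaudin Hamiltonians as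
coefficients of the first-order poles. -/
theorem tOp_pole_expansion {N : ℕ} {H : Type*} [AddCommGroup H] [Module ℂ H]
    (hN : 1 ≤ N) (G : OspGaudinData N H) (lam : ℂ) (hlam : ∀ a, lam ≠ G.z a) :
    G.tOp lam = ∑ a,
      ((((lam - G.z a)^2)⁻¹) •
          (G.h a * G.h a - G.h a + (4:ℂ) • (G.Xp a * G.Xm a)
            + (2:ℂ) • (G.vp a * G.vm a))
        + (2 * (lam - G.z a)⁻¹) • G.Gham a) :=
  tOp_pole_expansion_general G lam hlam
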